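/- arXiv:2203.07466 — 3 statements merged into one kernel-verified Lean document; each statement's English description precedes it below -/
import Mathlib

section
/- Let m > 1 and set m* = min(m, 2). There exists a constant C > 0 depending only on m such that for all real numbers e and f, ||e+f|^m - |e|^m - m|e|^{m-2} e f| ≤ C(|e|^{m-m*} |f|^{m*} + |f|^m), where |e|^{m-2} e is interpreted as 0 when e = 0. -/
open Real

lemma mvt_rpow {p a b : ℝ} (ha : 0 < a) (hab : a < b) :
    ∃ c ∈ Set.Ioo a b, b ^ p - a ^ p = p * c ^ (p - 1) * (b - a) := by
  have hcont : ContinuousOn (fun x : ℝ => x ^ p) (Set.Icc a b) := by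
    apply ContinuousOn.rpow_const continuousOn_id
    intro x hx; exact Or.inl (ne_of_gt (lt_of_lt_of_le ha hx.1))
  have hderiv : ∀ x ∈ Set.Ioo a b, HasDerivAt (fun x : ℝ => x ^ p) (p * x ^ (p - 1)) x := by
    intro x hx
    exact Real.hasDerivAt_rpow_const (Or.inl (ne_of_gt (ha.trans hx.1)))
  obtain ⟨c, hc, hc'⟩ := exists_hasDerivAt_eq_slope (fun x : ℝ => x ^ p) _ hab hcont hderiv
  refine ⟨c, hc, ?_⟩
  have hb : b - a ≠ 0 := by linarith [hab]
  field_simp at hc'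
  linarith [hc']

lemma mvt_rpow' {p u v : ℝ} (hu : 0 < u) (hv : 0 < v) (huv : u ≠ v) :
    ∃ c, min u v < c ∧ c < max u v ∧ v ^ p - u ^ p = p * c ^ (p - 1) * (v - u) := by
  rcases lt_or_gt_of_ne huv with h | h
  · obtain ⟨c, hc, e⟩ := mvt_rpow (p := p) hu h
    exact ⟨c, by simpa [min_eq_left h.le] using hc.1, by simpa [max_eq_right h.le] using hc.2, e⟩
  · obtain ⟨c, hc, e⟩ := mvt_rpow (p := p) hv h
    exact ⟨c, by simpa [min_eq_right h.le] using hc.1, by simpa [max_eq_left h.le] using hc.2,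
      by linarith [e]⟩

lemma keyB {m : ℝ} (hm : 1 < m) {e f : ℝ} (he : 0 < e) (hf : f ≠ 0) (hef : 2*|f| < e) :
    ∃ d, e/2 ≤ d ∧ d ≤ 3*e/2 ∧
      |(e+f) ^ m - e ^ m - m * e ^ (m-1) * f| ≤ m * (m-1) * d ^ (m-2) * f^2 := by
  have hfe : |f| < e/2 := by linarith
  have hf1 : -(e/2) < f := by cases abs_lt.mp hfe; linarith
  have hf2 : f < e/2 := (abs_lt.mp hfe).2
  have hx : 0 < e + f := by linarith
  have hxe : e + f ≠ e := by intro h; apply hf; linarith [h]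
  obtain ⟨c, hc1, hc2, hc⟩ := mvt_rpow' (p := m) he hx hxe.symm
  have hcl : e/2 < c := lt_of_le_of_lt (by simp [le_min_iff]; constructor <;> linarith) hc1
  have hcu : c < 3*e/2 := lt_of_lt_of_le hc2 (by simp [max_le_iff]; constructor <;> linarith)
  have hc0 : 0 < c := by linarith
  have hce : c ≠ e := by
    intro h
    rcases lt_or_gt_of_ne hxe with h' | h'
    · have hlt : c < e := by rw [max_eq_left (by linarith : e + f ≤ e)] at hc2; exact hc2
      exact absurd h (ne_of_lt hlt)
    · have hlt : e < c := by rw [min_eq_left (by linarith : e ≤ e + f)] at hc1; exact hc1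
      exact absurd h (ne_of_gt hlt)
  obtain ⟨d, hd1, hd2, hd⟩ := mvt_rpow' (p := m - 1) he hc0 (Ne.symm hce)
  have hdl : e/2 < d := lt_of_le_of_lt (by simp [le_min_iff]; constructor <;> linarith) hd1
  have hdu : d < 3*e/2 := lt_of_lt_of_le hd2 (by simp [max_le_iff]; constructor <;> linarith)
  refine ⟨d, hdl.le, hdu.le, ?_⟩
  have key : (e+f) ^ m - e ^ m - m * e ^ (m-1) * f
      = m * ((m-1) * d ^ (m-1-1) * (c - e)) * f := by
    rw [← hd]
    have : (e+f) ^ m - e ^ m = m * c ^ (m-1) * f := by rw [hc]; ring_nf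
    linarith [this]
  have hm2 : m - 1 - 1 = m - 2 := by ring
  rw [key, hm2]
  have hd0 : (0:ℝ) < d := by linarith
  have hdp : (0:ℝ) < d ^ (m-2) := Real.rpow_pos_of_pos hd0 _
  have hl : e - |f| < c :=
    lt_of_le_of_lt (le_min (by linarith [abs_nonneg f]) (by linarith [neg_abs_le f])) hc1
  have hr : c < e + |f| :=
    lt_of_lt_of_le hc2 (max_le (by linarith [abs_nonneg f]) (by linarith [le_abs_self f]))
  have hcef : |c - e| ≤ |f| := abs_le.mpr ⟨by linarith, by linarith⟩
  have heq : |m * ((m-1) * d ^ (m-2) * (c-e)) * f| = m * ((m-1) * d ^ (m-2) * |c-e|) * |f| := by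
    rw [abs_mul, abs_mul, abs_mul, abs_mul, abs_of_pos (by linarith : (0:ℝ) < m),
      abs_of_pos (by linarith : (0:ℝ) < m - 1), abs_of_pos hdp]
  rw [heq]
  have step : m * ((m-1) * d ^ (m-2) * |c-e|) * |f| ≤ m * ((m-1) * d ^ (m-2) * |f|) * |f| := by
    have h1 : (m-1) * d ^ (m-2) * |c-e| ≤ (m-1) * d ^ (m-2) * |f| :=
      mul_le_mul_of_nonneg_left hcef (mul_nonneg (by linarith) hdp.le)
    have h2 : m * ((m-1) * d ^ (m-2) * |c-e|) ≤ m * ((m-1) * d ^ (m-2) * |f|) :=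
      mul_le_mul_of_nonneg_left h1 (by linarith)
    exact mul_le_mul_of_nonneg_right h2 (abs_nonneg f)
  calc m * ((m-1) * d ^ (m-2) * |c-e|) * |f| ≤ m * ((m-1) * d ^ (m-2) * |f|) * |f| := step
    _ = m * (m-1) * d ^ (m-2) * f^2 := by rw [pow_two, ← abs_mul_abs_self f]; ring
lemma mainB {m : ℝ} (hm : 1 < m) {e f : ℝ} (he : 0 < e) (hf : f ≠ 0) (hef : 2*|f| < e) :
    |(e+f) ^ m - e ^ m - m * e ^ (m-1) * f|
      ≤ m * m * 3 ^ m * (e ^ (m - min m 2) * |f| ^ (min m 2) + |f| ^ m) := by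
  obtain ⟨d, hd1, hd2, hd⟩ := keyB hm he hf hef
  have hd0 : 0 < d := by linarith
  have hf0 : 0 < |f| := abs_pos.mpr hf
  have h3m : (0:ℝ) < 3 ^ m := Real.rpow_pos_of_pos (by norm_num) m
  have one_le_3m : (1:ℝ) ≤ 3 ^ m := Real.one_le_rpow (by norm_num) (by linarith)
  have hFm : (0:ℝ) ≤ |f| ^ m := Real.rpow_nonneg (abs_nonneg f) m
  have hfin : f ^ 2 = |f| ^ (2:ℝ) := by
    rw [Real.rpow_two, sq_abs]
  rcases le_or_gt 2 m with h2 | h2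
  · -- m ≥ 2
    rw [min_eq_right h2]
    have hdb : d ^ (m-2) ≤ (3*e/2) ^ (m-2) := Real.rpow_le_rpow hd0.le hd2 (by linarith)
    have hdb2 : (3*e/2) ^ (m-2) ≤ (3*e) ^ (m-2) :=
      Real.rpow_le_rpow (by linarith) (by linarith) (by linarith)
    have hsplit : ((3:ℝ)*e) ^ (m-2) = 3 ^ (m-2) * e ^ (m-2) := Real.mul_rpow (by norm_num) he.le
    have h33 : (3:ℝ) ^ (m-2) ≤ 3 ^ m := Real.rpow_le_rpow_of_exponent_le (by norm_num) (by linarith)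
    have heE : (0:ℝ) ≤ e ^ (m-2) := Real.rpow_nonneg he.le _
    have hD : d ^ (m-2) ≤ 3 ^ m * e ^ (m-2) := by
      calc d ^ (m-2) ≤ (3*e) ^ (m-2) := le_trans hdb hdb2
        _ = 3 ^ (m-2) * e ^ (m-2) := hsplit
        _ ≤ 3 ^ m * e ^ (m-2) := mul_le_mul_of_nonneg_right h33 heE
    have hA : (0:ℝ) ≤ e ^ (m-2) * |f| ^ (2:ℝ) :=
      mul_nonneg heE (Real.rpow_nonneg (abs_nonneg f) _)
    have step1 : m*(m-1)*d^(m-2)*f^2 ≤ m*(m-1)*(3^m*e^(m-2))*f^2 :=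
      mul_le_mul_of_nonneg_right
        (mul_le_mul_of_nonneg_left hD (by nlinarith)) (sq_nonneg f)
    calc |(e+f) ^ m - e ^ m - m * e ^ (m-1) * f| ≤ m*(m-1)*d^(m-2)*f^2 := hd
      _ ≤ m*(m-1)*(3^m*e^(m-2))*f^2 := step1
      _ = (m*(m-1)) * (3^m * (e^(m-2) * |f|^(2:ℝ))) := by rw [hfin]; ring
      _ ≤ (m*m) * (3^m * (e^(m-2) * |f|^(2:ℝ))) :=
          mul_le_mul_of_nonneg_right (by nlinarith) (mul_nonneg h3m.le hA)
      _ ≤ (m*m) * (3^m * (e^(m-2) * |f|^(2:ℝ) + |f|^m)) := by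
          apply mul_le_mul_of_nonneg_left _ (by nlinarith : (0:ℝ) ≤ m*m)
          apply mul_le_mul_of_nonneg_left _ h3m.le
          linarith
      _ = m*m*3^m*(e^(m-2)*|f|^(2:ℝ) + |f|^m) := by ring
  · -- m < 2
    rw [min_eq_left h2.le, sub_self, Real.rpow_zero]
    have he2 : (0:ℝ) < e/2 := by linarith
    have hfe : |f| ≤ e/2 := by linarith
    have hP : (0:ℝ) < (e/2) ^ (m-2) := Real.rpow_pos_of_pos he2 _
    have hdb : d ^ (m-2) ≤ (e/2) ^ (m-2) :=
      Real.rpow_le_rpow_of_nonpos he2 hd1 (by linarith)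
    have hfsplit : |f| ^ (2:ℝ) = |f| ^ (2-m) * |f| ^ m := by
      rw [← Real.rpow_add hf0]; ring_nf
    have hQ : |f| ^ (2-m) ≤ (e/2) ^ (2-m) :=
      Real.rpow_le_rpow (abs_nonneg f) hfe (by linarith)
    have hPQ : (e/2) ^ (m-2) * (e/2) ^ (2-m) = 1 := by
      rw [← Real.rpow_add he2]; norm_num
    have step1 : m*(m-1)*d^(m-2)*f^2 ≤ m*(m-1)*(e/2)^(m-2)*f^2 :=
      mul_le_mul_of_nonneg_right
        (mul_le_mul_of_nonneg_left hdb (by nlinarith)) (sq_nonneg f)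
    have step2 : m*(m-1)*(e/2)^(m-2)*f^2 ≤ m*(m-1)*(e/2)^(m-2)*((e/2)^(2-m)*|f|^m) := by
      apply mul_le_mul_of_nonneg_left _ (mul_nonneg (by nlinarith : (0:ℝ) ≤ m*(m-1)) hP.le)
      rw [hfin, hfsplit]
      exact mul_le_mul_of_nonneg_right hQ hFm
    have step3 : m*(m-1)*(e/2)^(m-2)*((e/2)^(2-m)*|f|^m) = m*(m-1)*|f|^m := by
      have : m*(m-1)*(e/2)^(m-2)*((e/2)^(2-m)*|f|^m)
          = m*(m-1)*((e/2)^(m-2)*(e/2)^(2-m))*|f|^m := by ring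
      rw [this, hPQ]; ring
    have final : m*(m-1)*|f|^m ≤ m*m*3^m*(1*|f|^m + |f|^m) := by
      have hmm : (0:ℝ) ≤ m*m := mul_nonneg (by linarith) (by linarith)
      have k1 : m*(m-1) ≤ m*m := by nlinarith
      have k2 : m*m ≤ m*m*3^m := le_mul_of_one_le_right hmm one_le_3m
      have key : m*(m-1) ≤ 2*(m*m*3^m) := by
        have : (0:ℝ) ≤ m*m*3^m := mul_nonneg hmm h3m.le
        linarith
      have hk := mul_le_mul_of_nonneg_right key hFm
      have hr : m*m*3^m*(1*|f|^m + |f|^m) = 2*(m*m*3^m)*|f|^m := by ring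
      linarith [hk]
    calc |(e+f) ^ m - e ^ m - m * e ^ (m-1) * f| ≤ m*(m-1)*d^(m-2)*f^2 := hd
      _ ≤ m*(m-1)*(e/2)^(m-2)*f^2 := step1
      _ ≤ m*(m-1)*(e/2)^(m-2)*((e/2)^(2-m)*|f|^m) := step2
      _ = m*(m-1)*|f|^m := step3
      _ ≤ m*m*3^m*(1*|f|^m + |f|^m) := final

/-- For `m > 1` and `m* = min m 2`, there is `C > 0` depending only on `m` such that
`||e+f|^m - |e|^m - m|e|^{m-2} e f| ≤ C(|e|^{m-m*}|f|^{m*} + |f|^m)`,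
where `|e|^{m-2} e` means `sign e * |e|^{m-1}` (zero at `e = 0`). -/
theorem stmt_0 (m : ℝ) (hm : 1 < m) :
    ∃ C > 0, ∀ e f : ℝ,
      abs (|e + f| ^ m - |e| ^ m - m * (Real.sign e * |e| ^ (m - 1)) * f)
        ≤ C * (|e| ^ (m - min m 2) * |f| ^ (min m 2) + |f| ^ m) := by
  have h2m : (0:ℝ) < 2 ^ m := Real.rpow_pos_of_pos (by norm_num) m
  have h3m : (0:ℝ) < 3 ^ m := Real.rpow_pos_of_pos (by norm_num) m
  have hm0 : (0:ℝ) < m := by linarith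
  have hmm3 : (0:ℝ) ≤ m * m * 3 ^ m := by positivity
  set C : ℝ := 3 ^ m + 2 ^ m + m * 2 ^ m + m * m * 3 ^ m + 1 with hC
  have hC0 : 0 < C := by positivity
  refine ⟨C, hC0, fun e f => ?_⟩
  have hT1 : (0:ℝ) ≤ |e| ^ (m - min m 2) * |f| ^ (min m 2) :=
    mul_nonneg (Real.rpow_nonneg (abs_nonneg e) _) (Real.rpow_nonneg (abs_nonneg f) _)
  have hFm : (0:ℝ) ≤ |f| ^ m := Real.rpow_nonneg (abs_nonneg f) m
  rcases eq_or_ne f 0 with rfl | hf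
  · simp only [add_zero, mul_zero, sub_zero, sub_self, abs_zero]
    positivity
  have hf0 : 0 < |f| := abs_pos.mpr hf
  rcases le_or_gt |e| (2*|f|) with hA | hB
  · -- case A : |e| ≤ 2|f|
    have hEm1 : (0:ℝ) ≤ |e| ^ (m-1) := Real.rpow_nonneg (abs_nonneg e) _
    have hsign : |Real.sign e| ≤ 1 := by
      rcases lt_trichotomy e 0 with h | h | h <;>
        simp [Real.sign_of_neg, Real.sign_of_pos, h]
    have hD : |m * (Real.sign e * |e| ^ (m-1)) * f| ≤ m * 2 ^ m * |f| ^ m := by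
      have e1 : |m * (Real.sign e * |e| ^ (m-1)) * f|
          = m * (|Real.sign e| * |e| ^ (m-1)) * |f| := by
        rw [abs_mul, abs_mul, abs_mul, abs_of_pos hm0, abs_of_nonneg hEm1]
      rw [e1]
      have h1 : |e| ^ (m-1) ≤ (2*|f|) ^ (m-1) :=
        Real.rpow_le_rpow (abs_nonneg e) hA (by linarith)
      have h2 : ((2:ℝ)*|f|) ^ (m-1) = 2 ^ (m-1) * |f| ^ (m-1) :=
        Real.mul_rpow (by norm_num) (abs_nonneg f)
      have h3 : (2:ℝ) ^ (m-1) ≤ 2 ^ m :=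
        Real.rpow_le_rpow_of_exponent_le (by norm_num) (by linarith)
      have h4 : |e| ^ (m-1) ≤ 2 ^ m * |f| ^ (m-1) := by
        calc |e| ^ (m-1) ≤ 2 ^ (m-1) * |f| ^ (m-1) := by rw [← h2]; exact h1
          _ ≤ 2 ^ m * |f| ^ (m-1) :=
            mul_le_mul_of_nonneg_right h3 (Real.rpow_nonneg (abs_nonneg f) _)
      have h5 : |Real.sign e| * |e| ^ (m-1) ≤ 2 ^ m * |f| ^ (m-1) := by
        calc |Real.sign e| * |e| ^ (m-1) ≤ 1 * |e| ^ (m-1) :=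
            mul_le_mul_of_nonneg_right hsign hEm1
          _ = |e| ^ (m-1) := one_mul _
          _ ≤ 2 ^ m * |f| ^ (m-1) := h4
      have h6 : m * (|Real.sign e| * |e| ^ (m-1)) * |f| ≤ m * (2 ^ m * |f| ^ (m-1)) * |f| :=
        mul_le_mul_of_nonneg_right (mul_le_mul_of_nonneg_left h5 hm0.le) (abs_nonneg f)
      have h7 : m * (2 ^ m * |f| ^ (m-1)) * |f| = m * 2 ^ m * |f| ^ m := by
        have : |f| ^ (m-1) * |f| = |f| ^ m := by
          rw [← Real.rpow_add_one (ne_of_gt hf0) (m-1)]; ring_nf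
        calc m * (2 ^ m * |f| ^ (m-1)) * |f| = m * 2 ^ m * (|f| ^ (m-1) * |f|) := by ring
          _ = m * 2 ^ m * |f| ^ m := by rw [this]
      linarith [h6, h7.le, h7.ge]
    have hEF : |e + f| ^ m ≤ 3 ^ m * |f| ^ m := by
      have h1 : |e + f| ≤ 3 * |f| := by
        calc |e + f| ≤ |e| + |f| := abs_add_le e f
          _ ≤ 3 * |f| := by linarith
      calc |e+f| ^ m ≤ (3*|f|) ^ m := Real.rpow_le_rpow (abs_nonneg _) h1 hm0.le
        _ = 3 ^ m * |f| ^ m := Real.mul_rpow (by norm_num) (abs_nonneg f)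
    have hE : |e| ^ m ≤ 2 ^ m * |f| ^ m := by
      calc |e| ^ m ≤ (2*|f|) ^ m := Real.rpow_le_rpow (abs_nonneg _) hA hm0.le
        _ = 2 ^ m * |f| ^ m := Real.mul_rpow (by norm_num) (abs_nonneg f)
    have tri : |(|e + f|) ^ m - |e| ^ m - m * (Real.sign e * |e| ^ (m - 1)) * f|
        ≤ |e+f| ^ m + |e| ^ m + |m * (Real.sign e * |e| ^ (m-1)) * f| := by
      have hEFnn : (0:ℝ) ≤ |e+f| ^ m := Real.rpow_nonneg (abs_nonneg _) m
      have hEnn : (0:ℝ) ≤ |e| ^ m := Real.rpow_nonneg (abs_nonneg _) m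
      calc |(|e + f|) ^ m - |e| ^ m - m * (Real.sign e * |e| ^ (m - 1)) * f|
          ≤ |(|e + f|) ^ m - |e| ^ m| + |m * (Real.sign e * |e| ^ (m-1)) * f| :=
            abs_sub _ _
        _ ≤ (|(|e+f|) ^ m| + |(|e|) ^ m|) + |m * (Real.sign e * |e| ^ (m-1)) * f| := by
            linarith [abs_sub (|e+f| ^ m) (|e| ^ m)]
        _ = |e+f| ^ m + |e| ^ m + |m * (Real.sign e * |e| ^ (m-1)) * f| := by
            rw [abs_of_nonneg hEFnn, abs_of_nonneg hEnn]
    have hbound : |(|e + f|) ^ m - |e| ^ m - m * (Real.sign e * |e| ^ (m - 1)) * f|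
        ≤ (3 ^ m + 2 ^ m + m * 2 ^ m) * |f| ^ m := by
      calc _ ≤ |e+f| ^ m + |e| ^ m + |m * (Real.sign e * |e| ^ (m-1)) * f| := tri
        _ ≤ 3 ^ m * |f| ^ m + 2 ^ m * |f| ^ m + m * 2 ^ m * |f| ^ m := by
            linarith [hEF, hE, hD]
        _ = (3 ^ m + 2 ^ m + m * 2 ^ m) * |f| ^ m := by ring
    have hKC : (3 ^ m + 2 ^ m + m * 2 ^ m) ≤ C := by
      rw [hC]; nlinarith
    calc |(|e + f|) ^ m - |e| ^ m - m * (Real.sign e * |e| ^ (m - 1)) * f|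
        ≤ (3 ^ m + 2 ^ m + m * 2 ^ m) * |f| ^ m := hbound
      _ ≤ C * |f| ^ m := mul_le_mul_of_nonneg_right hKC hFm
      _ ≤ C * (|e| ^ (m - min m 2) * |f| ^ (min m 2) + |f| ^ m) := by
          apply mul_le_mul_of_nonneg_left _ hC0.le
          linarith
  · -- case B : 2|f| < |e|
    have he0 : e ≠ 0 := by
      intro h; rw [h, abs_zero] at hB; linarith
    have hKC : m * m * 3 ^ m ≤ C := by rw [hC]; nlinarith
    rcases lt_or_gt_of_ne he0 with hneg | hpos
    · -- e < 0
      have he' : 0 < -e := by linarith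
      have hf' : -f ≠ 0 := neg_ne_zero.mpr hf
      have hef' : 2 * |-f| < -e := by
        rw [abs_neg]; rw [abs_of_neg hneg] at hB; linarith
      have hB' := mainB hm he' hf' hef'
      have hefneg : e + f < 0 := by
        have := abs_lt.mp (show |f| < -e/2 by rw [abs_of_neg hneg] at hB; linarith)
        linarith [this.2]
      have r1 : |e + f| = -e + -f := by rw [abs_of_neg hefneg]; ring
      have r2 : |e| = -e := abs_of_neg hneg
      have r3 : |f| = |-f| := (abs_neg f).symm
      rw [r1, r2, Real.sign_of_neg hneg, r3]
      have harg : (-e + -f) ^ m - (-e) ^ m - m * (-1 * (-e) ^ (m-1)) * f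
          = (-e + -f) ^ m - (-e) ^ m - m * (-e) ^ (m-1) * (-f) := by ring
      rw [harg]
      calc |(-e + -f) ^ m - (-e) ^ m - m * (-e) ^ (m-1) * (-f)|
          ≤ m * m * 3 ^ m * ((-e) ^ (m - min m 2) * |-f| ^ (min m 2) + |-f| ^ m) := hB'
        _ ≤ C * ((-e) ^ (m - min m 2) * |-f| ^ (min m 2) + |-f| ^ m) := by
            apply mul_le_mul_of_nonneg_right hKC
            have := Real.rpow_nonneg he'.le (m - min m 2)
            have := Real.rpow_nonneg (abs_nonneg (-f)) (min m 2)
            have := Real.rpow_nonneg (abs_nonneg (-f)) m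
            positivity
    · -- e > 0
      have hef' : 2 * |f| < e := by rw [abs_of_pos hpos] at hB; linarith
      have hB' := mainB hm hpos hf hef'
      have hefpos : 0 < e + f := by
        have := abs_lt.mp (show |f| < e/2 by linarith)
        linarith [this.1]
      rw [abs_of_pos hefpos, abs_of_pos hpos, Real.sign_of_pos hpos]
      have harg : (e + f) ^ m - e ^ m - m * (1 * e ^ (m-1)) * f
          = (e + f) ^ m - e ^ m - m * e ^ (m-1) * f := by ring
      rw [harg]
      calc |(e + f) ^ m - e ^ m - m * e ^ (m-1) * f|
          ≤ m * m * 3 ^ m * (e ^ (m - min m 2) * |f| ^ (min m 2) + |f| ^ m) := hB'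
        _ ≤ C * (e ^ (m - min m 2) * |f| ^ (min m 2) + |f| ^ m) := by
            apply mul_le_mul_of_nonneg_right hKC
            have := Real.rpow_nonneg hpos.le (m - min m 2)
            have := Real.rpow_nonneg (abs_nonneg f) (min m 2)
            positivity
end

section
/- Let U : ℝ^N → ℝ be continuous, positive, radially symmetric, and strictly decreasing in |x|, with ∫_{ℝ^N} U^2 < ∞ and ∫ |z|^{m−1} U(z)^2 dz < ∞ for some m > 1. If A = (A_1, ..., A_N) ∈ ℝ^N satisfies ∫_{ℝ^N} |z_i + A_i|^{m−2}(z_i + A_i) U(z)^2 dz = 0 for every i = 1, ..., N, then A = 0. -/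
open MeasureTheory

/-- The odd power function `|t|^{m-2} t = sign t * |t|^{m-1}`. -/
noncomputable def phi6 (m : ℝ) (s : ℝ) : ℝ := Real.sign s * |s| ^ (m - 1)

lemma phi6_neg (m s : ℝ) : phi6 m (-s) = - phi6 m s := by
  simp [phi6, Real.sign_neg]

lemma phi6_zero (m : ℝ) : phi6 m 0 = 0 := by simp [phi6]

lemma phi6_pos {m : ℝ} (hm : 1 < m) {s : ℝ} (hs : 0 < s) : 0 < phi6 m s := by
  have : Real.sign s = 1 := Real.sign_of_pos hs
  rw [phi6, this, one_mul, abs_of_pos hs]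
  exact Real.rpow_pos_of_pos hs _

lemma phi6_strictMono {m : ℝ} (hm : 1 < m) : StrictMono (phi6 m) := by
  have hpos : ∀ {s u : ℝ}, 0 ≤ s → s < u → phi6 m s < phi6 m u := by
    intro s u hs hsu
    rcases eq_or_lt_of_le hs with h | h
    · rw [← h, phi6_zero]; exact phi6_pos hm (h ▸ hsu)
    · rw [phi6, phi6, Real.sign_of_pos h, Real.sign_of_pos (h.trans hsu), one_mul, one_mul,
        abs_of_pos h, abs_of_pos (h.trans hsu)]
      exact Real.rpow_lt_rpow h.le hsu (by linarith)
  intro s u hsu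
  rcases le_or_gt 0 s with hs | hs
  · exact hpos hs hsu
  rcases lt_or_ge 0 u with hu | hu
  · calc phi6 m s < 0 := by
          have := phi6_pos hm (neg_pos.mpr hs)
          rw [phi6_neg] at this; linarith
      _ < phi6 m u := phi6_pos hm hu
  · have h1 : phi6 m (-u) < phi6 m (-s) := hpos (by linarith) (by linarith)
    rw [phi6_neg, phi6_neg] at h1; linarith

lemma phi6_abs (m : ℝ) (hm : m - 1 ≠ 0) (s : ℝ) : |phi6 m s| = |s| ^ (m - 1) := by
  rcases lt_trichotomy s 0 with h | rfl | h
  · rw [phi6, Real.sign_of_neg h]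
    rw [neg_one_mul, abs_neg, abs_of_nonneg (Real.rpow_nonneg (abs_nonneg s) _)]
  · simp [phi6, Real.zero_rpow hm]
  · rw [phi6, Real.sign_of_pos h, one_mul,
      abs_of_nonneg (Real.rpow_nonneg (abs_nonneg s) _)]

lemma measurable_phi6 (m : ℝ) (hm : 0 ≤ m - 1) : Measurable (phi6 m) := by
  unfold phi6 Real.sign
  apply Measurable.mul
  · exact Measurable.ite (measurableSet_lt measurable_id measurable_const) measurable_const
      (Measurable.ite (measurableSet_lt measurable_const measurable_id) measurable_const
        measurable_const)
  · exact (continuous_abs.rpow_const (fun x => Or.inr hm)).measurable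

lemma add_rpow_le6 {a b p : ℝ} (ha : 0 ≤ a) (hb : 0 ≤ b) (hp : 0 ≤ p) :
    (a + b) ^ p ≤ 2 ^ p * (a ^ p + b ^ p) := by
  rcases le_total a b with h | h
  · calc (a + b) ^ p ≤ (2 * b) ^ p :=
          Real.rpow_le_rpow (by linarith) (by linarith) hp
      _ = 2 ^ p * b ^ p := Real.mul_rpow (by norm_num) hb
      _ ≤ 2 ^ p * (a ^ p + b ^ p) := by
          have := Real.rpow_nonneg ha p
          have h2 : (0:ℝ) ≤ 2 ^ p := Real.rpow_nonneg (by norm_num) p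
          nlinarith
  · calc (a + b) ^ p ≤ (2 * a) ^ p :=
          Real.rpow_le_rpow (by linarith) (by linarith) hp
      _ = 2 ^ p * a ^ p := Real.mul_rpow (by norm_num) ha
      _ ≤ 2 ^ p * (a ^ p + b ^ p) := by
          have := Real.rpow_nonneg hb p
          have h2 : (0:ℝ) ≤ 2 ^ p := Real.rpow_nonneg (by norm_num) p
          nlinarith

lemma coord_le_norm6 {N : ℕ} (z : EuclideanSpace ℝ (Fin N)) (i : Fin N) : |z i| ≤ ‖z‖ := by
  have := EuclideanSpace.norm_eq z
  rw [this]
  have h1 : |z i| = Real.sqrt (‖z i‖ ^ 2) := by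
    rw [Real.sqrt_sq_eq_abs, Real.norm_eq_abs, abs_abs]
  rw [h1]
  apply Real.sqrt_le_sqrt
  exact Finset.single_le_sum (f := fun j => ‖z j‖ ^ 2) (fun j _ => sq_nonneg _)
    (Finset.mem_univ i)

/-- If `U` is continuous, positive, radially symmetric and strictly radially decreasing,
with `U² ∈ L¹` and `|z|^{m−1} U² ∈ L¹` for some `m > 1`, and `A ∈ ℝ^N` satisfies
`∫ |z_i + A_i|^{m−2}(z_i + A_i) U(z)² dz = 0` for every `i`, then `A = 0`.
Here `|t|^{m−2} t` is interpreted as `sign t * |t|^{m−1}` (zero at `t = 0`). -/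
theorem stmt_6 {N : ℕ} (m : ℝ) (hm : 1 < m)
    (U : EuclideanSpace ℝ (Fin N) → ℝ) (hUcont : Continuous U)
    (hUpos : ∀ x, 0 < U x)
    (hUrad : ∀ x y : EuclideanSpace ℝ (Fin N), ‖x‖ = ‖y‖ → U x = U y)
    (hUdec : ∀ x y : EuclideanSpace ℝ (Fin N), ‖x‖ < ‖y‖ → U y < U x)
    (hU2 : Integrable (fun z => (U z) ^ 2))
    (hUm : Integrable (fun z => ‖z‖ ^ (m - 1) * (U z) ^ 2))
    (A : EuclideanSpace ℝ (Fin N))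
    (hA : ∀ i : Fin N,
      ∫ z : EuclideanSpace ℝ (Fin N),
        Real.sign (z i + A i) * |z i + A i| ^ (m - 1) * (U z) ^ 2 = 0) :
    A = 0 := by
  by_contra hA0
  have hEx : ∃ i : Fin N, A i ≠ 0 := by
    by_contra h
    push_neg at h
    exact hA0 (by ext i; simpa using h i)
  obtain ⟨i, hi⟩ := hEx
  set a : ℝ := A i with ha
  -- translate hA into phi6 form
  have hA' : ∫ z : EuclideanSpace ℝ (Fin N), phi6 m (z i + a) * (U z) ^ 2 = 0 := by
    simpa [phi6, mul_assoc] using hA i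
  -- integrability of the relevant functions
  have hmeas : ∀ c : ℝ, ∀ s : ℝ, AEStronglyMeasurable
      (fun z : EuclideanSpace ℝ (Fin N) => phi6 m (s * z i + c) * (U z) ^ 2) volume := by
    intro c s
    apply Measurable.aestronglyMeasurable
    exact (((measurable_phi6 m (by linarith)).comp
      ((((EuclideanSpace.proj i).continuous.measurable).const_mul s).add_const c))).mul
      ((hUcont.measurable).pow_const 2)
  have hbound : ∀ c : ℝ, ∀ s : ℝ, |s| ≤ 1 → ∀ z : EuclideanSpace ℝ (Fin N),
      ‖phi6 m (s * z i + c) * (U z) ^ 2‖ ≤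
        2 ^ (m - 1) * (‖z‖ ^ (m - 1) * (U z) ^ 2) +
        (2 ^ (m - 1) * |c| ^ (m - 1)) * (U z) ^ 2 := by
    intro c s hs z
    have hU2nn : (0:ℝ) ≤ (U z) ^ 2 := sq_nonneg _
    rw [norm_mul, Real.norm_eq_abs, Real.norm_eq_abs, abs_of_nonneg hU2nn, phi6_abs m (by linarith)]
    have h1 : |s * z i + c| ≤ ‖z‖ + |c| := by
      calc |s * z i + c| ≤ |s * z i| + |c| := abs_add_le _ _
        _ ≤ ‖z‖ + |c| := by
            have := coord_le_norm6 z i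
            have h2 : |s * z i| = |s| * |z i| := abs_mul _ _
            have h3 : |s| * |z i| ≤ 1 * |z i| :=
              mul_le_mul_of_nonneg_right hs (abs_nonneg _)
            nlinarith [abs_nonneg (z i)]
    have h2 : |s * z i + c| ^ (m - 1) ≤ (‖z‖ + |c|) ^ (m - 1) :=
      Real.rpow_le_rpow (abs_nonneg _) h1 (by linarith)
    have h3 : (‖z‖ + |c|) ^ (m - 1) ≤ 2 ^ (m - 1) * (‖z‖ ^ (m - 1) + |c| ^ (m - 1)) :=
      add_rpow_le6 (norm_nonneg z) (abs_nonneg c) (by linarith)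
    nlinarith [sq_nonneg (U z)]
  have hdom : Integrable (fun z : EuclideanSpace ℝ (Fin N) =>
      2 ^ (m - 1) * (‖z‖ ^ (m - 1) * (U z) ^ 2) +
      (2 ^ (m - 1) * |a| ^ (m - 1)) * (U z) ^ 2) :=
    (hUm.const_mul _).add (hU2.const_mul _)
  have hInt : ∀ s : ℝ, |s| ≤ 1 → Integrable
      (fun z : EuclideanSpace ℝ (Fin N) => phi6 m (s * z i + a) * (U z) ^ 2) := by
    intro s hs
    exact hdom.mono' (hmeas a s) (Filter.Eventually.of_forall (hbound a s hs))
  have hInt1 : Integrable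
      (fun z : EuclideanSpace ℝ (Fin N) => phi6 m (z i + a) * (U z) ^ 2) := by
    simpa using hInt 1 (by norm_num)
  have hInt2 : Integrable
      (fun z : EuclideanSpace ℝ (Fin N) => phi6 m (-(z i) + a) * (U z) ^ 2) := by
    have := hInt (-1) (by norm_num)
    simpa [neg_one_mul] using this
  -- reflection: replace z by -z
  have hRefl : ∫ z : EuclideanSpace ℝ (Fin N), phi6 m (-(z i) + a) * (U z) ^ 2 = 0 := by
    have hUneg : ∀ z : EuclideanSpace ℝ (Fin N), U (-z) = U z := fun z =>
      hUrad _ _ (norm_neg z)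
    calc ∫ z : EuclideanSpace ℝ (Fin N), phi6 m (-(z i) + a) * (U z) ^ 2
        = ∫ z : EuclideanSpace ℝ (Fin N), phi6 m ((-z) i + a) * (U (-z)) ^ 2 := by
          congr 1; funext z; rw [hUneg z]; rfl
      _ = ∫ z : EuclideanSpace ℝ (Fin N), phi6 m (z i + a) * (U z) ^ 2 :=
          integral_neg_eq_self (fun z : EuclideanSpace ℝ (Fin N) =>
            phi6 m (z i + a) * (U z) ^ 2) volume
      _ = 0 := hA'
  -- sum of the two integrals
  have hSum : ∫ z : EuclideanSpace ℝ (Fin N),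
      (phi6 m (z i + a) + phi6 m (-(z i) + a)) * (U z) ^ 2 = 0 := by
    have := integral_add hInt1 hInt2
    simp only [add_mul]
    rw [this, hA', hRefl, add_zero]
  -- the integrand has a strict sign
  rcases hi.lt_or_gt with hneg | hpos
  · -- a < 0 : integrand is everywhere negative; use the negated function
    have hptneg : ∀ z : EuclideanSpace ℝ (Fin N),
        0 < -((phi6 m (z i + a) + phi6 m (-(z i) + a)) * (U z) ^ 2) := by
      intro z
      have h1 : phi6 m (z i + a) < phi6 m (z i - a) :=
        phi6_strictMono hm (by linarith)
      have h2 : phi6 m (-(z i) + a) = - phi6 m (z i - a) := by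
        rw [show -(z i) + a = -(z i - a) by ring, phi6_neg]
      have hU2 : (0:ℝ) < (U z) ^ 2 := pow_pos (hUpos z) 2
      have hs : phi6 m (z i + a) + phi6 m (-(z i) + a) < 0 := by rw [h2]; linarith
      exact neg_pos.mpr (mul_neg_of_neg_of_pos hs hU2)
    have hIntNeg : Integrable (fun z : EuclideanSpace ℝ (Fin N) =>
        -((phi6 m (z i + a) + phi6 m (-(z i) + a)) * (U z) ^ 2)) := by
      apply Integrable.neg
      simp only [add_mul]
      exact hInt1.add hInt2
    have h0 : (0:ℝ) < ∫ z : EuclideanSpace ℝ (Fin N),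
        -((phi6 m (z i + a) + phi6 m (-(z i) + a)) * (U z) ^ 2) := by
      rw [(integral_pos_iff_support_of_nonneg (fun z => (hptneg z).le) hIntNeg)]
      have : Function.support (fun z : EuclideanSpace ℝ (Fin N) =>
          -((phi6 m (z i + a) + phi6 m (-(z i) + a)) * (U z) ^ 2)) = Set.univ := by
        ext z
        simp only [Function.mem_support, Set.mem_univ, iff_true]
        exact (hptneg z).ne'
      rw [this]
      exact isOpen_univ.measure_pos volume ⟨0, trivial⟩
    rw [integral_neg, hSum, neg_zero] at h0
    exact lt_irrefl 0 h0
  · -- a > 0 : integrand is everywhere positive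
    have hptpos : ∀ z : EuclideanSpace ℝ (Fin N),
        0 < (phi6 m (z i + a) + phi6 m (-(z i) + a)) * (U z) ^ 2 := by
      intro z
      have h1 : phi6 m (z i - a) < phi6 m (z i + a) :=
        phi6_strictMono hm (by linarith)
      have h2 : phi6 m (-(z i) + a) = - phi6 m (z i - a) := by
        rw [show -(z i) + a = -(z i - a) by ring, phi6_neg]
      have hU2 : (0:ℝ) < (U z) ^ 2 := pow_pos (hUpos z) 2
      have hs : 0 < phi6 m (z i + a) + phi6 m (-(z i) + a) := by rw [h2]; linarith
      exact mul_pos hs hU2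
    have hIntPos : Integrable (fun z : EuclideanSpace ℝ (Fin N) =>
        (phi6 m (z i + a) + phi6 m (-(z i) + a)) * (U z) ^ 2) := by
      simp only [add_mul]
      exact hInt1.add hInt2
    have h0 : (0:ℝ) < ∫ z : EuclideanSpace ℝ (Fin N),
        (phi6 m (z i + a) + phi6 m (-(z i) + a)) * (U z) ^ 2 := by
      rw [(integral_pos_iff_support_of_nonneg (fun z => (hptpos z).le) hIntPos)]
      have : Function.support (fun z : EuclideanSpace ℝ (Fin N) =>
          (phi6 m (z i + a) + phi6 m (-(z i) + a)) * (U z) ^ 2) = Set.univ := by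
        ext z
        simp only [Function.mem_support, Set.mem_univ, iff_true]
        exact (hptpos z).ne'
      rw [this]
      exact isOpen_univ.measure_pos volume ⟨0, trivial⟩
    rw [hSum] at h0
    exact lt_irrefl 0 h0
end

section
/- Suppose a sequence of nonnegative reals x_ε (ε → 0⁺) satisfies x_ε^m ≤ C((ε^{m−τ} + x_ε^{m(1−τ)}) x_ε + ε^m + x_ε^{m−m*} ε^{m*}) for constants C > 0, m > 1, m* = min(m,2), and 0 < τ with mτ < 1, and x_ε → 0 as ε → 0. Then x_ε = O(ε), i.e., there exist C' > 0 and ε_0 > 0 such that x_ε ≤ C' ε for 0 < ε < ε_0. -/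
open Filter Topology

/-- Bootstrap/absorption: if `x_ε ≥ 0` satisfies
`x_ε^m ≤ C((ε^{m−τ} + x_ε^{m(1−τ)}) x_ε + ε^m + x_ε^{m−m*} ε^{m*})` for all `ε > 0`,
with `C > 0`, `m > 1`, `m* = min m 2`, `0 < τ`, `mτ < 1`, and `x_ε → 0` as `ε → 0⁺`,
then `x_ε = O(ε)`: there are `C' > 0` and `ε₀ > 0` with `x_ε ≤ C' ε` for `0 < ε < ε₀`. -/
theorem stmt_8 (x : ℝ → ℝ) (C m τ : ℝ) (hC : 0 < C) (hm : 1 < m)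
    (hτ : 0 < τ) (hmτ : m * τ < 1)
    (hx0 : ∀ ε : ℝ, 0 < ε → 0 ≤ x ε)
    (hineq : ∀ ε : ℝ, 0 < ε →
      (x ε) ^ m ≤ C * ((ε ^ (m - τ) + (x ε) ^ (m * (1 - τ))) * x ε + ε ^ m +
        (x ε) ^ (m - min m 2) * ε ^ (min m 2)))
    (hlim : Tendsto x (𝓝[>] (0 : ℝ)) (𝓝 0)) :
    ∃ C' > 0, ∃ ε₀ > 0, ∀ ε : ℝ, 0 < ε → ε < ε₀ → x ε ≤ C' * ε := by
  have hτ1 : τ < 1 := by nlinarith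
  set m' := min m 2 with hm'def
  have hm'pos : 0 < m' := lt_min (by linarith) (by norm_num)
  have hm'le : m' ≤ m := min_le_left _ _
  have h1mτ : 0 < 1 - m * τ := by linarith
  have h1τ : 0 < 1 - τ := by linarith
  have hmτpos : 0 < m - τ := by linarith
  have h8C : (0:ℝ) < 8 * C := by linarith
  set C' := max 1 (max ((8*C) ^ ((m-τ)⁻¹)) (max ((8*C) ^ (m⁻¹)) ((8*C) ^ (m'⁻¹)))) with hC'def
  have hC'1 : (1:ℝ) ≤ C' := le_max_left _ _
  have hC'pos : (0:ℝ) < C' := lt_of_lt_of_le one_pos hC'1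
  have key : ∀ p : ℝ, 0 < p → (8*C) ^ (p⁻¹) ≤ C' → 8*C ≤ C' ^ p := by
    intro p hp hle
    calc 8*C = ((8*C) ^ (p⁻¹)) ^ p := (Real.rpow_inv_rpow h8C.le (ne_of_gt hp)).symm
      _ ≤ C' ^ p := Real.rpow_le_rpow (Real.rpow_nonneg h8C.le _) hle hp.le
  have hb1 : 8*C ≤ C' ^ (m-τ) :=
    key _ hmτpos (le_trans (le_max_left _ _) (le_max_right _ _))
  have hb2 : 8*C ≤ C' ^ m :=
    key m (by linarith)
      (le_trans (le_trans (le_max_left _ _) (le_max_right _ _)) (le_max_right _ _))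
  have hb3 : 8*C ≤ C' ^ m' :=
    key m' hm'pos
      (le_trans (le_trans (le_max_right _ _) (le_max_right _ _)) (le_max_right _ _))
  set δ := min 1 ((8*C)⁻¹ ^ (1 - m*τ)⁻¹) with hδdef
  have hδpos : 0 < δ := lt_min one_pos (Real.rpow_pos_of_pos (inv_pos.mpr h8C) _)
  have hδ1 : δ ≤ 1 := min_le_left _ _
  have hδ2 : δ ^ (1 - m*τ) ≤ (8*C)⁻¹ := by
    calc δ ^ (1 - m*τ) ≤ ((8*C)⁻¹ ^ (1 - m*τ)⁻¹) ^ (1 - m*τ) :=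
          Real.rpow_le_rpow hδpos.le (min_le_right _ _) h1mτ.le
      _ = (8*C)⁻¹ := Real.rpow_inv_rpow (inv_pos.mpr h8C).le (ne_of_gt h1mτ)
  -- get ε₀ from the limit
  have hev : ∀ᶠ ε in 𝓝[>] (0:ℝ), x ε < δ := hlim.eventually (gt_mem_nhds hδpos)
  rw [eventually_nhdsWithin_iff, Metric.eventually_nhds_iff] at hev
  obtain ⟨ε₀, hε₀pos, hball⟩ := hev
  refine ⟨C', hC'pos, ε₀, hε₀pos, fun ε hε hεε₀ => ?_⟩
  have hyδ : x ε < δ := by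
    apply hball _ (Set.mem_Ioi.mpr hε)
    rwa [Real.dist_eq, sub_zero, abs_of_pos hε]
  by_contra hcon
  push_neg at hcon
  set y := x ε with hy_def
  have hy : 0 < y := lt_trans (by positivity) hcon
  have hεy : ε < y / C' := by
    rw [lt_div_iff₀ hC'pos]; linarith [hcon]
  have hym : 0 < y ^ m := Real.rpow_pos_of_pos hy m
  have hdiv : ∀ p : ℝ, (y / C') ^ p = y ^ p / C' ^ p := fun p =>
    Real.div_rpow hy.le hC'pos.le p
  -- small powers of y
  have hy1τ : y ^ (1-τ) ≤ 1 :=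
    Real.rpow_le_one hy.le (le_trans hyδ.le hδ1) h1τ.le
  have hy1mτ : y ^ (1 - m*τ) ≤ (8*C)⁻¹ :=
    le_trans (Real.rpow_le_rpow hy.le hyδ.le h1mτ.le) hδ2
  -- term 1 : C * (ε^(m-τ) * y) ≤ (1/8) * y^m
  have hf1 : C * (ε ^ (m-τ) * y) ≤ (1/8) * y ^ m := by
    have h1 : ε ^ (m-τ) ≤ y ^ (m-τ) / C' ^ (m-τ) := by
      rw [← hdiv]; exact Real.rpow_le_rpow hε.le hεy.le hmτpos.le
    have h2 : y ^ (m-τ) * y = y ^ (1-τ) * y ^ m := by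
      have ha := Real.rpow_add hy (m-τ) 1
      have hb := Real.rpow_add hy (1-τ) m
      rw [Real.rpow_one] at ha
      rw [← ha, ← hb, show m - τ + 1 = 1 - τ + m by ring]
    have hCm : 0 < C' ^ (m-τ) := Real.rpow_pos_of_pos hC'pos _
    have h3 : C * (ε ^ (m-τ) * y) ≤ C * (y ^ (1-τ) * y ^ m) / C' ^ (m-τ) := by
      rw [mul_div_assoc]
      apply mul_le_mul_of_nonneg_left _ hC.le
      calc ε ^ (m-τ) * y ≤ (y ^ (m-τ) / C' ^ (m-τ)) * y :=
            mul_le_mul_of_nonneg_right h1 hy.le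
        _ = (y ^ (m-τ) * y) / C' ^ (m-τ) := by ring
        _ = y ^ (1-τ) * y ^ m / C' ^ (m-τ) := by rw [h2]
    calc C * (ε ^ (m-τ) * y) ≤ C * (y ^ (1-τ) * y ^ m) / C' ^ (m-τ) := h3
      _ ≤ C * (1 * y ^ m) / (8*C) := by
          apply div_le_div₀ (by positivity) _ h8C hb1
          exact mul_le_mul_of_nonneg_left
            (mul_le_mul_of_nonneg_right hy1τ hym.le) hC.le
      _ = (1/8) * y ^ m := by field_simp
  -- term 2 : C * (y^(m(1-τ)) * y) ≤ (1/8) * y^m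
  have hf2 : C * (y ^ (m*(1-τ)) * y) ≤ (1/8) * y ^ m := by
    have h2 : y ^ (m*(1-τ)) * y = y ^ (1 - m*τ) * y ^ m := by
      have ha := Real.rpow_add hy (m*(1-τ)) 1
      have hb := Real.rpow_add hy (1 - m*τ) m
      rw [Real.rpow_one] at ha
      rw [← ha, ← hb, show m*(1-τ) + 1 = 1 - m*τ + m by ring]
    rw [h2]
    calc C * (y ^ (1 - m*τ) * y ^ m) ≤ C * ((8*C)⁻¹ * y ^ m) := by
          apply mul_le_mul_of_nonneg_left _ hC.le
          exact mul_le_mul_of_nonneg_right hy1mτ hym.le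
      _ = (1/8) * y ^ m := by field_simp
  -- term 3 : C * ε^m ≤ (1/8) * y^m
  have hf3 : C * ε ^ m ≤ (1/8) * y ^ m := by
    have h1 : ε ^ m ≤ y ^ m / C' ^ m := by
      rw [← hdiv]; exact Real.rpow_le_rpow hε.le hεy.le (by linarith)
    calc C * ε ^ m ≤ C * (y ^ m / C' ^ m) := mul_le_mul_of_nonneg_left h1 hC.le
      _ = C * y ^ m / C' ^ m := by ring
      _ ≤ C * y ^ m / (8*C) := by
          apply div_le_div₀ (by positivity) le_rfl h8C hb2
      _ = (1/8) * y ^ m := by field_simp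
  -- term 4 : C * (y^(m-m') * ε^m') ≤ (1/8) * y^m
  have hf4 : C * (y ^ (m - m') * ε ^ m') ≤ (1/8) * y ^ m := by
    have h1 : ε ^ m' ≤ y ^ m' / C' ^ m' := by
      rw [← hdiv]; exact Real.rpow_le_rpow hε.le hεy.le hm'pos.le
    have h2 : y ^ (m - m') * y ^ m' = y ^ m := by
      rw [← Real.rpow_add hy, sub_add_cancel]
    have hCm : 0 < C' ^ m' := Real.rpow_pos_of_pos hC'pos _
    have hymm' : 0 ≤ y ^ (m - m') := (Real.rpow_pos_of_pos hy _).le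
    calc C * (y ^ (m - m') * ε ^ m')
        ≤ C * (y ^ (m - m') * (y ^ m' / C' ^ m')) := by
          apply mul_le_mul_of_nonneg_left _ hC.le
          exact mul_le_mul_of_nonneg_left h1 hymm'
      _ = C * (y ^ (m - m') * y ^ m') / C' ^ m' := by ring
      _ = C * y ^ m / C' ^ m' := by rw [h2]
      _ ≤ C * y ^ m / (8*C) := div_le_div₀ (by positivity) le_rfl h8C hb3
      _ = (1/8) * y ^ m := by field_simp
  have hmain := hineq ε hε
  rw [← hy_def] at hmain
  have : y ^ m ≤ (1/2) * y ^ m := by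
    calc y ^ m ≤ C * ((ε ^ (m - τ) + y ^ (m * (1 - τ))) * y + ε ^ m +
        y ^ (m - m') * ε ^ m') := hmain
      _ = C * (ε ^ (m-τ) * y) + C * (y ^ (m*(1-τ)) * y) + C * ε ^ m +
          C * (y ^ (m - m') * ε ^ m') := by ring
      _ ≤ (1/8) * y ^ m + (1/8) * y ^ m + (1/8) * y ^ m + (1/8) * y ^ m := by
          linarith [hf1, hf2, hf3, hf4]
      _ = (1/2) * y ^ m := by ring
  linarith
end
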